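/- arXiv:2409.10295 — 4 statements merged into one kernel-verified Lean document; each statement's English description precedes it below -/
import Mathlib

section
/- Let Θ ⊆ [θ̲, θ̄] and let F̄ be the affine approximation of the folding operator given by F̄_{ij}(θ) = (z_{ij} − z_{i,j−1}) · (θ_i − θ̲_i)/(θ̄_i − θ̲_i). Then F̄(Θ) is contained in the outer approximation Ψ'⋄ = {ψ' : F⁺(ψ') ∈ Θ} ∩ conv(F([θ̲, θ̄])). -/
/-!
Each block `F̄_i(θ)` is the point `t_i • F_i(θ̄)` with `t_i = (θ_i - θ̲_i)/(θ̄_i - θ̲_i) ∈ [0, 1]`,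
so it lies on the segment from `F_i(θ̲) = 0` to `F_i(θ̄) = (z_{ij} - z_{i,j-1})_j`. As `F` acts
blockwise and the box is a product, `F([θ̲, θ̄])` is the product of the blockwise images, whose convex
hull contains the product of their convex hulls. The increments of the `i`-th block telescope to
`θ̄_i - θ̲_i`, so `F⁺(F̄(θ)) = θ`.
-/

/-- The folding operator. -/
noncomputable def fold (I : ℕ) (J : Fin I → ℕ) (z : (i : Fin I) → ℕ → ℝ)
    (θ : Fin I → ℝ) : (i : Fin I) → Fin (J i) → ℝ :=
  fun i j => min (max (θ i - z i j.val) 0) (z i (j.val + 1) - z i j.val)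

/-- The affine approximation `F̄` of the folding operator. -/
noncomputable def foldbar (I : ℕ) (J : Fin I → ℕ) (z : (i : Fin I) → ℕ → ℝ)
    (θ : Fin I → ℝ) : (i : Fin I) → Fin (J i) → ℝ :=
  fun i j => (z i (j.val + 1) - z i j.val) * (θ i - z i 0) / (z i (J i) - z i 0)

/-- The retraction `F⁺`. -/
noncomputable def retr (I : ℕ) (J : Fin I → ℕ) (z : (i : Fin I) → ℕ → ℝ)
    (ψ : (i : Fin I) → Fin (J i) → ℝ) : Fin I → ℝ :=
  fun i => z i 0 + ∑ j, ψ i j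

open Set

noncomputable def foldCoord (z : ℕ → ℝ) (n : ℕ) (x : ℝ) : Fin n → ℝ :=
  fun j => min (max (x - z j) 0) (z (j + 1) - z j)

theorem fold_eq_piMap (I : ℕ) (J : Fin I → ℕ) (z : (i : Fin I) → ℕ → ℝ) :
    fold I J z = Pi.map fun i => foldCoord (z i) (J i) :=
  rfl

theorem Fin.sum_univ_sub_succ (z : ℕ → ℝ) (n : ℕ) :
    ∑ j : Fin n, (z (j + 1) - z j) = z n - z 0 := by
  rw [Fin.sum_univ_eq_sum_range (fun j => z (j + 1) - z j), Finset.sum_range_sub]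

section foldCoord

variable {z : ℕ → ℝ} {n : ℕ}

theorem monotoneOn_Iic_of_le_succ (hz : ∀ j < n, z j ≤ z (j + 1)) : MonotoneOn z (Iic n) :=
  monotoneOn_of_le_succ ordConnected_Iic fun j _ _ hj1 => by
    rw [Order.succ_eq_add_one] at hj1 ⊢
    exact hz j (Nat.lt_of_succ_le hj1)

variable (hz : ∀ j < n, z j ≤ z (j + 1))
include hz

theorem foldCoord_left : foldCoord z n (z 0) = 0 := by
  funext j
  have h0 : z 0 ≤ z j := monotoneOn_Iic_of_le_succ hz (Nat.zero_le n) j.isLt.le (Nat.zero_le _)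
  simp [foldCoord, h0, hz j j.isLt]

theorem foldCoord_right : foldCoord z n (z n) = fun j : Fin n => z (j + 1) - z j := by
  funext j
  have hn : z (j + 1) ≤ z n := monotoneOn_Iic_of_le_succ hz j.isLt self_mem_Iic j.isLt
  have hj : z j ≤ z (j + 1) := hz j j.isLt
  simp only [foldCoord]
  rw [max_eq_left (by linarith), min_eq_right (by linarith)]

theorem smul_foldCoord_right_mem_convexHull {t : ℝ} (ht : t ∈ Icc 0 1) :
    t • foldCoord z n (z n) ∈ convexHull ℝ (foldCoord z n '' Icc (z 0) (z n)) := by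
  have h0n : z 0 ≤ z n := monotoneOn_Iic_of_le_succ hz (Nat.zero_le n) self_mem_Iic (Nat.zero_le n)
  have hleft : foldCoord z n (z 0) ∈ foldCoord z n '' Icc (z 0) (z n) :=
    mem_image_of_mem _ ⟨le_rfl, h0n⟩
  have hright : foldCoord z n (z n) ∈ foldCoord z n '' Icc (z 0) (z n) :=
    mem_image_of_mem _ ⟨h0n, le_rfl⟩
  refine segment_subset_convexHull hleft hright ⟨1 - t, t, by linarith [ht.2], ht.1, by ring, ?_⟩
  rw [foldCoord_left hz, smul_zero, zero_add]

end foldCoord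

section fold

variable {I : ℕ} {J : Fin I → ℕ} {z : (i : Fin I) → ℕ → ℝ} {θ : Fin I → ℝ}

theorem foldbar_apply (i : Fin I) :
    foldbar I J z θ i =
      ((θ i - z i 0) / (z i (J i) - z i 0)) • fun j : Fin (J i) => z i (j + 1) - z i j := by
  funext j
  simp only [foldbar, Pi.smul_apply, smul_eq_mul]
  ring

theorem retr_foldbar (hθ : θ ∈ Icc (fun i => z i 0) (fun i => z i (J i))) :
    retr I J z (foldbar I J z θ) = θ := by
  funext i
  -- If `z i (J i) = z i 0`, then `θ i = z i 0` and the division by zero returns `0`.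
  have hdiv : (θ i - z i 0) / (z i (J i) - z i 0) * (z i (J i) - z i 0) = θ i - z i 0 :=
    div_mul_cancel_of_imp fun h => by linarith [hθ.1 i, hθ.2 i]
  simp only [retr, foldbar_apply, Pi.smul_apply, smul_eq_mul, ← Finset.mul_sum,
    Fin.sum_univ_sub_succ, hdiv]
  ring

theorem foldbar_mem_convexHull (hz : ∀ i, ∀ j, j < J i → z i j ≤ z i (j + 1))
    (hθ : θ ∈ Icc (fun i => z i 0) (fun i => z i (J i))) :
    foldbar I J z θ ∈ convexHull ℝ (fold I J z '' Icc (fun i => z i 0) (fun i => z i (J i))) := by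
  rw [fold_eq_piMap, ← pi_univ_Icc, piMap_image_univ_pi]
  refine mem_convexHull_pi fun i _ => ?_
  have ht : (θ i - z i 0) / (z i (J i) - z i 0) ∈ Icc (0 : ℝ) 1 :=
    ⟨div_nonneg (by linarith [hθ.1 i]) (by linarith [hθ.1 i, hθ.2 i]),
      div_le_one_of_le₀ (by linarith [hθ.2 i]) (by linarith [hθ.1 i, hθ.2 i])⟩
  rw [foldbar_apply, ← foldCoord_right (hz i)]
  exact smul_foldCoord_right_mem_convexHull (hz i) ht

end fold

theorem stmt_6_general (I : ℕ) (J : Fin I → ℕ)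
    (z : (i : Fin I) → ℕ → ℝ)
    (hz : ∀ i, ∀ j, j < J i → z i j < z i (j + 1))
    (Θ : Set (Fin I → ℝ))
    (hΘ : Θ ⊆ Set.Icc (fun i => z i 0) (fun i => z i (J i))) :
    foldbar I J z '' Θ ⊆
      {ψ : (i : Fin I) → Fin (J i) → ℝ | retr I J z ψ ∈ Θ} ∩
        convexHull ℝ (fold I J z '' Set.Icc (fun i => z i 0) (fun i => z i (J i))) := by
  rintro _ ⟨θ, hθ, rfl⟩
  refine ⟨?_, foldbar_mem_convexHull (fun i j hj => (hz i j hj).le) (hΘ hθ)⟩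
  rwa [mem_ofPred_eq, retr_foldbar (hΘ hθ)]

theorem stmt_6 (I : ℕ) (J : Fin I → ℕ) (hJ : ∀ i, 1 ≤ J i)
    (z : (i : Fin I) → ℕ → ℝ)
    (hz : ∀ i, ∀ j, j < J i → z i j < z i (j + 1))
    (Θ : Set (Fin I → ℝ))
    (hΘ : Θ ⊆ Set.Icc (fun i => z i 0) (fun i => z i (J i))) :
    foldbar I J z '' Θ ⊆
      {ψ : (i : Fin I) → Fin (J i) → ℝ | retr I J z ψ ∈ Θ} ∩
        convexHull ℝ (fold I J z '' Set.Icc (fun i => z i 0) (fun i => z i (J i))) :=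
  stmt_6_general I J z hz Θ hΘ
end

section
/- For any cost vector c ∈ ℝ^n, the two affinely adjustable robust optimization problems attain the same optimal value: inf { sup_{ξ∈Ψ} cᵀ x(ξ) : x : ℝ^N → ℝ^n affine, A·x(ξ) ≤ b(ξ) for all ξ ∈ Ψ } = inf { sup_{ψ'∈Ψ'⋄} cᵀ x'(ψ') : x' : ℝ^{N'} → ℝ^n affine, A·x'(ψ') ≤ b(R(ψ')) for all ψ' ∈ Ψ'⋄ }, where both infima are taken over the respective sets of feasible affine maps (and equal +∞ if a feasible set is empty). -/
/-- The Moore–Penrose left inverse `E⁺ = (EᵀE)⁻¹Eᵀ`. -/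
noncomputable def pinv {I N : ℕ} (E : Matrix (Fin I) (Fin N) ℝ) :
    Matrix (Fin N) (Fin I) ℝ :=
  (E.transpose * E)⁻¹ * E.transpose

/-- The retraction operator `R = E⁺ ∘ F⁺`. -/
noncomputable def retrOp (I N : ℕ) (J : Fin I → ℕ) (z : (i : Fin I) → ℕ → ℝ)
    (E : Matrix (Fin I) (Fin N) ℝ) (ψ : (i : Fin I) → Fin (J i) → ℝ) : Fin N → ℝ :=
  (pinv E).mulVec (retr I J z ψ)

/-- The outer approximation `Ψ'⋄ = {ψ' : F⁺(ψ') ∈ Θ} ∩ conv(F([θ̲,θ̄]))`. -/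
noncomputable def PsiOuter (I : ℕ) (J : Fin I → ℕ) (z : (i : Fin I) → ℕ → ℝ)
    (Θ : Set (Fin I → ℝ)) : Set ((i : Fin I) → Fin (J i) → ℝ) :=
  {ψ | retr I J z ψ ∈ Θ} ∩
    convexHull ℝ (fold I J z '' Set.Icc (fun i => z i 0) (fun i => z i (J i)))

/-!
Decision rules are transported between the two problems by composition with affine maps. Since
`E⁺ E = 1`, the retraction `R` maps `Ψ'⋄` onto `Ψ`, so `x ↦ x ∘ R` sends feasible rules of the
original problem to feasible rules of the lifted one with the same worst-case value. Conversely,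
the affine lift `G ξ`, which spreads `θ = E ξ` over the segments `[z_{i,j-1}, z_{i,j}]` in
proportion to their lengths, maps `Ψ` into `Ψ'⋄` and satisfies `R ∘ G = id`, so `x' ↦ x' ∘ G`
produces feasible rules whose worst-case value is no larger; the suprema over `Ψ'⋄` are finite
because `Ψ'⋄` lies in the convex hull of a compact set.
-/

open Matrix Set

section RobustValue

variable {k X Y V : Type*} [Ring k] [AddCommGroup X] [Module k X] [AddCommGroup Y] [Module k Y]
  [AddCommGroup V] [Module k V]

theorem iInf_sSup_eq_of_leftInvOn (feasible : X → V → Prop) (f : V → ℝ) {P : Set X} {Q : Set Y}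
    (G : X →ᵃ[k] Y) (R : Y →ᵃ[k] X) (hG : MapsTo G P Q) (hR : MapsTo R Q P)
    (hRG : LeftInvOn R G P) (hP : P.Nonempty) (hQ : ∀ x' : Y →ᵃ[k] V, BddAbove ((f ∘ x') '' Q)) :
    ⨅ x : {x : X →ᵃ[k] V // ∀ ξ ∈ P, feasible ξ (x ξ)}, ((sSup ((f ∘ x.1) '' P) : ℝ) : EReal) =
      ⨅ x' : {x' : Y →ᵃ[k] V // ∀ ψ ∈ Q, feasible (R ψ) (x' ψ)},
        ((sSup ((f ∘ x'.1) '' Q) : ℝ) : EReal) := by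
  apply le_antisymm
  · refine le_iInf fun x' => iInf_le_of_le ⟨x'.1.comp G, fun ξ hξ => ?_⟩ ?_
    · simpa only [AffineMap.comp_apply, hRG hξ] using x'.2 _ (hG hξ)
    · refine EReal.coe_le_coe_iff.2 (csSup_le_csSup (hQ x') (hP.image _) ?_)
      rw [AffineMap.coe_comp, ← Function.comp_assoc, image_comp]
      exact image_mono (image_subset_iff.2 hG)
  · refine le_iInf fun x => iInf_le_of_le ⟨x.1.comp R, fun ψ hψ => x.2 _ (hR hψ)⟩ ?_
    rw [AffineMap.coe_comp, ← Function.comp_assoc, image_comp,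
      (hRG.surjOn hG).image_eq_of_mapsTo hR]

end RobustValue

theorem Bornology.IsBounded.bddAbove_image {X : Type*} [PseudoMetricSpace X] [ProperSpace X]
    {Q : Set X} (hQ : Bornology.IsBounded Q) {g : X → ℝ} (hg : Continuous g) :
    BddAbove (g '' Q) :=
  (hQ.isCompact_closure.image hg).bddAbove.mono (image_mono subset_closure)

theorem pinv_mul_cancel {I N : ℕ} {E : Matrix (Fin I) (Fin N) ℝ}
    (hE : Function.Injective E.mulVec) : pinv E * E = 1 := by
  have hEE : Function.Injective (Eᵀ * E).mulVec := by
    rw [← coe_mulVecLin, ← LinearMap.ker_eq_bot, ker_mulVecLin_transpose_mul_self,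
      LinearMap.ker_eq_bot, coe_mulVecLin]
    exact hE
  rw [pinv, Matrix.mul_assoc]
  exact nonsing_inv_mul _ ((isUnit_iff_isUnit_det _).1 (mulVec_injective_iff_isUnit.1 hEE))

theorem pinv_mulVec_mulVec {I N : ℕ} {E : Matrix (Fin I) (Fin N) ℝ}
    (hE : Function.Injective E.mulVec) (v : Fin N → ℝ) : pinv E *ᵥ (E *ᵥ v) = v := by
  rw [mulVec_mulVec, pinv_mul_cancel hE, one_mulVec]

section Folding

variable {I : ℕ} {J : Fin I → ℕ} {z : (i : Fin I) → ℕ → ℝ}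

theorem breakpoint_strictMonoOn (hz : ∀ i, ∀ j, j < J i → z i j < z i (j + 1)) (i : Fin I) :
    StrictMonoOn (z i) (Iic (J i)) :=
  strictMonoOn_Iic_of_lt_succ fun j hj => by simpa using hz i j hj

theorem breakpoint_le (hz : ∀ i, ∀ j, j < J i → z i j < z i (j + 1)) (i : Fin I) {j k : ℕ}
    (hjk : j ≤ k) (hk : k ≤ J i) : z i j ≤ z i k :=
  (breakpoint_strictMonoOn hz i).monotoneOn (hjk.trans hk) hk hjk

theorem breakpoint_zero_lt_last (hJ : ∀ i, 1 ≤ J i)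
    (hz : ∀ i, ∀ j, j < J i → z i j < z i (j + 1)) (i : Fin I) : z i 0 < z i (J i) :=
  breakpoint_strictMonoOn hz i (Nat.zero_le _) (le_refl (J i)) (hJ i)

variable (J) in
noncomputable def blockSum : ((i : Fin I) → Fin (J i) → ℝ) →ₗ[ℝ] (Fin I → ℝ) where
  toFun ψ i := ∑ j, ψ i j
  map_add' ψ ψ' := by funext i; simp [Finset.sum_add_distrib]
  map_smul' r ψ := by funext i; simp [Finset.mul_sum]

variable (J z) in
noncomputable def retrAffine : ((i : Fin I) → Fin (J i) → ℝ) →ᵃ[ℝ] (Fin I → ℝ) :=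
  AffineMap.mk' (retr I J z) (blockSum J) 0 fun ψ => by
    funext i; simp [retr, blockSum, add_comm]

variable (J z) in
noncomputable def proportionalLift : (Fin I → ℝ) →ᵃ[ℝ] ((i : Fin I) → Fin (J i) → ℝ) :=
  AffineMap.mk' (fun θ i j => (θ i - z i 0) / (z i (J i) - z i 0) * (z i (j + 1) - z i j))
    (LinearMap.pi fun i => LinearMap.pi fun j =>
      ((z i (j + 1) - z i j) / (z i (J i) - z i 0)) • LinearMap.proj i) 0
    fun θ => by funext i j; simp; ring

theorem retr_proportionalLift (hJ : ∀ i, 1 ≤ J i)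
    (hz : ∀ i, ∀ j, j < J i → z i j < z i (j + 1))
    (θ : Fin I → ℝ) : retr I J z (proportionalLift J z θ) = θ := by
  funext i
  have hΔ := breakpoint_zero_lt_last hJ hz i
  simp only [retr, proportionalLift, AffineMap.coe_mk']
  rw [← Finset.mul_sum, Fin.sum_univ_eq_sum_range (fun j => z i (j + 1) - z i j),
    Finset.sum_range_sub, div_mul_cancel₀ _ (sub_pos.2 hΔ).ne']
  ring

theorem proportionalLift_mem_convexHull (hJ : ∀ i, 1 ≤ J i)
    (hz : ∀ i, ∀ j, j < J i → z i j < z i (j + 1)) {θ : Fin I → ℝ}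
    (hθ : θ ∈ Icc (fun i => z i 0) (fun i => z i (J i))) :
    proportionalLift J z θ ∈
      convexHull ℝ (fold I J z '' Icc (fun i => z i 0) (fun i => z i (J i))) := by
  set box := Icc (fun i => z i 0) (fun i => z i (J i))
  -- `fold` acts coordinatewise: the image of the box contains the product of coordinate images.
  have hpi : univ.pi (fun i => (fun θ => fold I J z θ i) '' box) ⊆ fold I J z '' box := by
    intro ψ hψ
    choose θ' hθ' using fun i => hψ i (mem_univ i)
    exact ⟨fun i => θ' i i, ⟨fun i => (hθ' i).1.1 i, fun i => (hθ' i).1.2 i⟩,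
      funext fun i => (hθ' i).2⟩
  refine convexHull_mono hpi (mem_convexHull_pi fun i _ => ?_)
  have hbox : (fun i => z i 0) ≤ fun i => z i (J i) := hθ.1.trans hθ.2
  refine segment_subset_convexHull (mem_image_of_mem _ (left_mem_Icc.2 hbox))
    (mem_image_of_mem _ (right_mem_Icc.2 hbox)) ?_
  have hΔ := breakpoint_zero_lt_last hJ hz i
  have hs : (θ i - z i 0) / (z i (J i) - z i 0) ∈ Icc (0 : ℝ) 1 := by
    rw [mem_Icc, div_nonneg_iff, div_le_one (by linarith)]
    constructor
    · exact Or.inl ⟨by linarith [hθ.1 i], by linarith⟩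
    · linarith [hθ.2 i]
  convert lineMap_mem_segment ℝ _ _ hs using 1
  funext j
  have h0j := breakpoint_le hz i (Nat.zero_le j) j.isLt.le
  have hjsucc := breakpoint_le hz i (Nat.le_succ j) j.isLt
  have hsuccJ := breakpoint_le hz i j.isLt le_rfl
  simp only [proportionalLift, AffineMap.coe_mk', AffineMap.lineMap_apply_module, fold,
    Pi.add_apply, Pi.smul_apply, smul_eq_mul]
  rw [max_eq_right (by linarith), min_eq_left (by linarith), max_eq_left (by linarith),
    min_eq_right (by linarith)]
  ring

theorem mapsTo_proportionalLift (hJ : ∀ i, 1 ≤ J i)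
    (hz : ∀ i, ∀ j, j < J i → z i j < z i (j + 1))
    {Θ : Set (Fin I → ℝ)} (hΘ : Θ ⊆ Icc (fun i => z i 0) (fun i => z i (J i))) :
    MapsTo (proportionalLift J z) Θ (PsiOuter I J z Θ) := fun θ hθ =>
  ⟨by rwa [mem_ofPred_eq, retr_proportionalLift hJ hz],
    proportionalLift_mem_convexHull hJ hz (hΘ hθ)⟩

theorem continuous_fold : Continuous (fold I J z) := by
  unfold fold
  fun_prop

theorem isBounded_PsiOuter (Θ : Set (Fin I → ℝ)) : Bornology.IsBounded (PsiOuter I J z Θ) :=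
  (isBounded_convexHull.2 (isCompact_Icc.image continuous_fold).isBounded).subset
    inter_subset_right

variable {N : ℕ} {E : Matrix (Fin I) (Fin N) ℝ}

variable (J z E) in
noncomputable def retrOpAffine : ((i : Fin I) → Fin (J i) → ℝ) →ᵃ[ℝ] (Fin N → ℝ) :=
  (pinv E).mulVecLin.toAffineMap.comp (retrAffine J z)

theorem mapsTo_retrOp (hE : Function.Injective E.mulVec) (Ψ : Set (Fin N → ℝ)) :
    MapsTo (retrOp I N J z E) (PsiOuter I J z (E.mulVec '' Ψ)) Ψ := by
  rintro ψ ⟨⟨ξ, hξ, hψ⟩, -⟩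
  rwa [retrOp, ← hψ, pinv_mulVec_mulVec hE]

theorem retrOp_proportionalLift (hJ : ∀ i, 1 ≤ J i)
    (hz : ∀ i, ∀ j, j < J i → z i j < z i (j + 1))
    (hE : Function.Injective E.mulVec) (ξ : Fin N → ℝ) :
    retrOp I N J z E (proportionalLift J z (E *ᵥ ξ)) = ξ := by
  rw [retrOp, retr_proportionalLift hJ hz, pinv_mulVec_mulVec hE]

end Folding

theorem stmt_8_general (I N n m : ℕ) (J : Fin I → ℕ) (hJ : ∀ i, 1 ≤ J i)
    (z : (i : Fin I) → ℕ → ℝ)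
    (hz : ∀ i, ∀ j, j < J i → z i j < z i (j + 1))
    (Ψ : Set (Fin N → ℝ)) (hΨne : Ψ.Nonempty)
    (E : Matrix (Fin I) (Fin N) ℝ) (hE : Function.Injective E.mulVec)
    (hΘbox : E.mulVec '' Ψ ⊆ Set.Icc (fun i => z i 0) (fun i => z i (J i)))
    (A : Matrix (Fin m) (Fin n) ℝ)
    (b : (Fin N → ℝ) →ᵃ[ℝ] (Fin m → ℝ))
    (c : Fin n → ℝ) :
    (⨅ x : {x : (Fin N → ℝ) →ᵃ[ℝ] (Fin n → ℝ) // ∀ ξ ∈ Ψ, A.mulVec (x ξ) ≤ b ξ},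
        ((sSup ((fun ξ => dotProduct c (x.1 ξ)) '' Ψ) : ℝ) : EReal)) =
    (⨅ x' : {x' : ((i : Fin I) → Fin (J i) → ℝ) →ᵃ[ℝ] (Fin n → ℝ) //
        ∀ ψ ∈ PsiOuter I J z (E.mulVec '' Ψ),
          A.mulVec (x'.1 ψ) ≤ b (retrOp I N J z E ψ)},
        ((sSup ((fun ψ => dotProduct c (x'.1 ψ)) '' PsiOuter I J z (E.mulVec '' Ψ)) : ℝ) : EReal)) :=
  iInf_sSup_eq_of_leftInvOn (fun ξ v => A *ᵥ v ≤ b ξ) (dotProduct c)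
    ((proportionalLift J z).comp E.mulVecLin.toAffineMap) (retrOpAffine J z E)
    ((mapsTo_proportionalLift hJ hz hΘbox).comp (mapsTo_image _ _)) (mapsTo_retrOp hE Ψ)
    (fun ξ _ => retrOp_proportionalLift hJ hz hE ξ) hΨne fun x' =>
      (isBounded_PsiOuter _).bddAbove_image
        (continuous_const.dotProduct x'.continuous_of_finiteDimensional)

theorem stmt_8 (I N n m : ℕ) (J : Fin I → ℕ) (hJ : ∀ i, 1 ≤ J i)
    (z : (i : Fin I) → ℕ → ℝ)
    (hz : ∀ i, ∀ j, j < J i → z i j < z i (j + 1))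
    (Ψ : Set (Fin N → ℝ)) (hΨne : Ψ.Nonempty) (hΨcomp : IsCompact Ψ)
    (E : Matrix (Fin I) (Fin N) ℝ) (hE : Function.Injective E.mulVec)
    (hΘbox : E.mulVec '' Ψ ⊆ Set.Icc (fun i => z i 0) (fun i => z i (J i)))
    (A : Matrix (Fin m) (Fin n) ℝ)
    (b : (Fin N → ℝ) →ᵃ[ℝ] (Fin m → ℝ))
    (c : Fin n → ℝ) :
    (⨅ x : {x : (Fin N → ℝ) →ᵃ[ℝ] (Fin n → ℝ) // ∀ ξ ∈ Ψ, A.mulVec (x ξ) ≤ b ξ},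
        ((sSup ((fun ξ => dotProduct c (x.1 ξ)) '' Ψ) : ℝ) : EReal)) =
    (⨅ x' : {x' : ((i : Fin I) → Fin (J i) → ℝ) →ᵃ[ℝ] (Fin n → ℝ) //
        ∀ ψ ∈ PsiOuter I J z (E.mulVec '' Ψ),
          A.mulVec (x'.1 ψ) ≤ b (retrOp I N J z E ψ)},
        ((sSup ((fun ψ => dotProduct c (x'.1 ψ)) '' PsiOuter I J z (E.mulVec '' Ψ)) : ℝ) : EReal)) :=
  stmt_8_general I N n m J hJ z hz Ψ hΨne E hE hΘbox A b c
end

section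
/- Let Θ ⊆ ℝ^I be nonempty, compact and signed-permutation invariant, and let z⁺ ∈ ℝ^I satisfy 0 ≤ z⁺_1 ≤ z⁺_2 ≤ … ≤ z⁺_I. Then there exists a maximizer θ* of θ ↦ d(θ, [−z⁺, z⁺]) over Θ that is nonnegative and arranged in nonascending order, i.e., θ*_1 ≥ θ*_2 ≥ … ≥ θ*_I ≥ 0. -/
/-- `Θ` is invariant under signed permutations of the coordinates. -/
def SignedPermInvariant (I : ℕ) (Θ : Set (Fin I → ℝ)) : Prop :=
  ∀ (σ : Equiv.Perm (Fin I)) (ε : Fin I → ℝ), (∀ i, ε i = 1 ∨ ε i = -1) →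
    ∀ θ ∈ Θ, (fun i => ε i * θ (σ i)) ∈ Θ

/-- ℓ1-distance from a point to the box `[zm, zp]`. -/
noncomputable def l1dist (I : ℕ) (θ zm zp : Fin I → ℝ) : ℝ :=
  sInf ((fun θ' => ∑ i, |θ i - θ' i|) '' Set.Icc zm zp)

/-!
The ℓ1 distance from `θ` to the box `[-z⁺, z⁺]` is `∑ i, (|θ i| - z⁺ i)⁺`: it is continuous, so it
attains its maximum on the compact set `Θ` at some `θ₀`, and it depends on `θ` only through `|θ|`.
Sorting `|θ₀|` in nonascending order gives, by signed-permutation invariance, another point of `Θ`;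
since `z⁺` is nondecreasing, a rearrangement inequality for `∑ i, (a i - z i)⁺` shows that the
sorted point is still a maximizer.
-/

open Finset

section
variable {α : Type*} [AddCommGroup α] [LinearOrder α] [IsOrderedAddMonoid α]

lemma abs_sub_max_min_eq {a b : α} (hab : a ≤ b) (x : α) :
    |x - max a (min x b)| = max (max (a - x) (x - b)) 0 := by
  grind [abs_of_nonneg, abs_of_nonpos]

lemma max_sub_le_abs_sub {a b x y : α} (hy : y ∈ Set.Icc a b) :
    max (max (a - x) (x - b)) 0 ≤ |x - y| := by
  grind [le_abs_self, neg_abs_le]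

end

lemma l1dist_eq_sum {I : ℕ} {zm zp : Fin I → ℝ} (h : zm ≤ zp) (θ : Fin I → ℝ) :
    l1dist I θ zm zp = ∑ i, max (max (zm i - θ i) (θ i - zp i)) 0 := by
  set p : Fin I → ℝ := fun i => max (zm i) (min (θ i) (zp i))
  have hp : p ∈ Set.Icc zm zp :=
    ⟨fun i => le_max_left _ _, fun i => max_le (h i) (min_le_right _ _)⟩
  refine IsLeast.csInf_eq ⟨⟨p, hp, sum_congr rfl fun i _ => abs_sub_max_min_eq (h i) _⟩, ?_⟩
  rintro _ ⟨θ', hθ', rfl⟩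
  exact sum_le_sum fun i _ => max_sub_le_abs_sub ⟨hθ'.1 i, hθ'.2 i⟩

lemma l1dist_neg_self_eq_sum {I : ℕ} {zp : Fin I → ℝ} (hzp : 0 ≤ zp) (θ : Fin I → ℝ) :
    l1dist I θ (-zp) zp = ∑ i, max (|θ i| - zp i) 0 := by
  rw [l1dist_eq_sum (neg_le_self hzp)]
  refine sum_congr rfl fun i _ => ?_
  rw [Pi.neg_apply, neg_sub_comm, max_sub_sub_right, max_comm (-θ i), ← abs_eq_max_neg]

lemma Fin.val_le_val_of_strictMono {k n : ℕ} {e : Fin k → Fin n} (he : StrictMono e) (j : Fin k) :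
    (j : ℕ) ≤ e j := by
  simpa using card_le_card_of_injOn e (s := Iic j) (t := Iic (e j))
    (fun i hi => mem_Iic.2 (he.monotone (mem_Iic.1 hi))) he.injective.injOn

section
variable {M : Type*} [AddCommMonoid M] [PartialOrder M] [IsOrderedAddMonoid M] {n k : ℕ}

lemma Finset.castLE_le_orderEmbOfFin (T : Finset (Fin n)) (hT : #T = k) (hk : k ≤ n) (j : Fin k) :
    Fin.castLE hk j ≤ T.orderEmbOfFin hT j :=
  Fin.le_def.2 (Fin.val_le_val_of_strictMono (T.orderEmbOfFin hT).strictMono j)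

lemma Finset.sum_le_sum_castLE_of_antitone {f : Fin n → M} (hf : Antitone f)
    {T : Finset (Fin n)} (hT : #T = k) (hk : k ≤ n) :
    ∑ i ∈ T, f i ≤ ∑ j : Fin k, f (Fin.castLE hk j) := by
  rw [← map_orderEmbOfFin_univ T hT, sum_map]
  exact sum_le_sum fun j _ => hf (T.castLE_le_orderEmbOfFin hT hk j)

lemma Finset.sum_castLE_le_sum_of_monotone {f : Fin n → M} (hf : Monotone f)
    {T : Finset (Fin n)} (hT : #T = k) (hk : k ≤ n) :
    ∑ j : Fin k, f (Fin.castLE hk j) ≤ ∑ i ∈ T, f i := by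
  rw [← map_orderEmbOfFin_univ T hT, sum_map]
  exact sum_le_sum fun j _ => hf (T.castLE_le_orderEmbOfFin hT hk j)

end

section
variable {α : Type*} [AddCommGroup α] [LinearOrder α] [IsOrderedAddMonoid α] {n : ℕ}

/-- The positive part is attained on the set `T` where `a ∘ π ≥ z`; over `#T` indices, `a` sums to
at most its `#T` largest values and `z` to at least its `#T` smallest. -/
theorem sum_max_sub_comp_perm_le {a z : Fin n → α} (ha : Antitone a) (hz : Monotone z)
    (π : Equiv.Perm (Fin n)) :
    ∑ i, max (a (π i) - z i) 0 ≤ ∑ i, max (a i - z i) 0 := by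
  set T := univ.filter fun i => 0 ≤ a (π i) - z i
  have hk : #T ≤ n := (card_le_univ T).trans_eq (Fintype.card_fin n)
  have hTπ : #(T.map π.toEmbedding) = #T := card_map _
  calc ∑ i, max (a (π i) - z i) 0 = ∑ i ∈ T, (a (π i) - z i) := by
        rw [sum_filter]
        refine sum_congr rfl fun i _ => ?_
        split_ifs with h
        exacts [max_eq_left h, max_eq_right (le_of_not_ge h)]
    _ = ∑ i ∈ T.map π.toEmbedding, a i - ∑ i ∈ T, z i := by rw [sum_sub_distrib, sum_map]; rfl
    _ ≤ ∑ j : Fin #T, a (Fin.castLE hk j) - ∑ j : Fin #T, z (Fin.castLE hk j) :=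
        sub_le_sub (sum_le_sum_castLE_of_antitone ha hTπ hk)
          (sum_castLE_le_sum_of_monotone hz rfl hk)
    _ ≤ ∑ j : Fin #T, max (a (Fin.castLE hk j) - z (Fin.castLE hk j)) 0 := by
        rw [← sum_sub_distrib]; exact sum_le_sum fun j _ => le_max_left _ _
    _ = ∑ i ∈ univ.map (Fin.castLEEmb hk), max (a i - z i) 0 := by
        rw [sum_map]; rfl
    _ ≤ ∑ i, max (a i - z i) 0 := sum_le_univ_sum_of_nonneg fun i => le_max_right _ _

end

lemma SignedPermInvariant.abs_comp_perm_mem {I : ℕ} {Θ : Set (Fin I → ℝ)}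
    (hΘ : SignedPermInvariant I Θ) (σ : Equiv.Perm (Fin I)) {θ : Fin I → ℝ} (hθ : θ ∈ Θ) :
    (fun i => |θ (σ i)|) ∈ Θ := by
  convert hΘ σ (fun i => if θ (σ i) < 0 then -1 else 1) (fun i => by split_ifs <;> simp) θ hθ
    using 2 with i
  split_ifs with h
  · rw [abs_of_neg h, neg_one_mul]
  · rw [abs_of_nonneg (not_lt.1 h), one_mul]

lemma exists_perm_antitone_abs_comp {n : ℕ} (θ : Fin n → ℝ) :
    ∃ σ : Equiv.Perm (Fin n), Antitone fun i => |θ (σ i)| := by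
  have hsort := Tuple.monotone_sort fun i => -|θ i|
  exact ⟨_, fun _ _ hij => neg_le_neg_iff.1 (hsort hij)⟩

theorem stmt_15 (I : ℕ) (Θ : Set (Fin I → ℝ))
    (hne : Θ.Nonempty) (hcomp : IsCompact Θ)
    (hSPI : SignedPermInvariant I Θ)
    (zp : Fin I → ℝ) (hnn : ∀ i, 0 ≤ zp i) (hmono : Monotone zp) :
    ∃ θs ∈ Θ, (∀ i, 0 ≤ θs i) ∧ Antitone θs ∧
      ∀ θ ∈ Θ, l1dist I θ (fun i => -(zp i)) zp ≤ l1dist I θs (fun i => -(zp i)) zp := by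
  have hcont : Continuous fun θ : Fin I → ℝ => ∑ i, max (|θ i| - zp i) 0 := by fun_prop
  obtain ⟨θ₀, hθ₀, hmax⟩ := hcomp.exists_isMaxOn hne hcont.continuousOn
  obtain ⟨σ, hσ⟩ := exists_perm_antitone_abs_comp θ₀
  refine ⟨_, hSPI.abs_comp_perm_mem σ hθ₀, fun i => abs_nonneg _, hσ, fun θ hθ => ?_⟩
  calc l1dist I θ (fun i => -(zp i)) zp = ∑ i, max (|θ i| - zp i) 0 :=
        l1dist_neg_self_eq_sum hnn θ
    _ ≤ ∑ i, max (|θ₀ i| - zp i) 0 := hmax hθ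
    _ = ∑ i, max (|θ₀ (σ (σ⁻¹ i))| - zp i) 0 := by simp
    _ ≤ ∑ i, max (|θ₀ (σ i)| - zp i) 0 := sum_max_sub_comp_perm_le hσ hmono σ⁻¹
    _ = ∑ i, max (|(|θ₀ (σ i)|)| - zp i) 0 := by simp only [abs_abs]
    _ = l1dist I (fun i => |θ₀ (σ i)|) (fun i => -(zp i)) zp :=
        (l1dist_neg_self_eq_sum hnn _).symm
end

section
/- Let Θ_1, …, Θ_n ⊆ ℝ^I each be nonempty, compact, convex, containing the origin, and signed-permutation invariant, with associated functions η_1, …, η_n each having non-increasing differences. Then the intersection Θ = Θ_1 ∩ … ∩ Θ_n is signed-permutation invariant, its function η satisfies η(i) = min over h ∈ [n] of η_h(i) for every i ∈ [I], and η has non-increasing differences (η(i+1) − η(i) ≤ η(i) − η(i−1) for all i ∈ [I−1], with η(0) = 0 and η_h(0) = 0). -/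
/-- `eta I Θ i` is the maximal ℓ1-norm of the first `i` components over `Θ`. -/
noncomputable def eta (I : ℕ) (Θ : Set (Fin I → ℝ)) (i : ℕ) : ℝ :=
  sSup ((fun θ => ∑ i' ∈ Finset.univ.filter (fun i' : Fin I => (i' : ℕ) < i), |θ i'|) '' Θ)

/-!
Monotonicity gives `η ≤ min_h η_h`. Conversely, let `θ ∈ Θ_h` attain `η_h(i)`. Two sign changes
of `θ`, agreeing on the first `i` coordinates and opposite on the others, have midpoint
`(|θ_1|, …, |θ_i|, 0, …, 0) ∈ Θ_h`; averaging its cyclic shifts of the first `i` coordinates gives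
the flat vector `(η_h(i)/i, …, η_h(i)/i, 0, …, 0)`, and shrinking it towards `0` shows that the flat
vector of every level `m ≤ min_h η_h(i)` lies in every `Θ_h`, hence `η(i) ≥ min_h η_h(i)`.
Non-increasing differences pass to `η` because `η(i ± 1) ≤ η_h(i ± 1)` for every `h` while
`η(i) = min_h η_h(i)`.
-/

open Finset

section AbsSumOn

variable {ι : Type*}

def absSumOn (s : Finset ι) (θ : ι → ℝ) : ℝ := ∑ j ∈ s, |θ j|

noncomputable def maxAbsSumOn (Θ : Set (ι → ℝ)) (s : Finset ι) : ℝ := sSup (absSumOn s '' Θ)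

lemma continuous_absSumOn (s : Finset ι) : Continuous (absSumOn s) :=
  continuous_finsetSum _ fun j _ => (continuous_apply j).abs

variable {Θ Θ' : Set (ι → ℝ)} {s : Finset ι} {θ : ι → ℝ}

lemma absSumOn_le_maxAbsSumOn (hc : IsCompact Θ) (hθ : θ ∈ Θ) :
    absSumOn s θ ≤ maxAbsSumOn Θ s :=
  le_csSup (hc.image (continuous_absSumOn s)).bddAbove ⟨θ, hθ, rfl⟩

lemma exists_absSumOn_eq_maxAbsSumOn (hc : IsCompact Θ) (hne : Θ.Nonempty) :
    ∃ θ ∈ Θ, absSumOn s θ = maxAbsSumOn Θ s :=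
  (hc.image (continuous_absSumOn s)).sSup_mem (hne.image _)

lemma maxAbsSumOn_nonneg (hc : IsCompact Θ) (hzero : (0 : ι → ℝ) ∈ Θ) :
    0 ≤ maxAbsSumOn Θ s := by
  simpa [absSumOn] using absSumOn_le_maxAbsSumOn (s := s) hc hzero

lemma maxAbsSumOn_mono (hc : IsCompact Θ') (hne : Θ.Nonempty) (h : Θ ⊆ Θ') :
    maxAbsSumOn Θ s ≤ maxAbsSumOn Θ' s :=
  csSup_le_csSup (hc.image (continuous_absSumOn s)).bddAbove (hne.image _) (Set.image_mono h)

end AbsSumOn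

lemma eta_eq_maxAbsSumOn (I : ℕ) (Θ : Set (Fin I → ℝ)) (i : ℕ) :
    eta I Θ i = maxAbsSumOn Θ (univ.filter fun j : Fin I => (j : ℕ) < i) :=
  rfl

namespace SignedPermInvariant

variable {I : ℕ} {Θ : Set (Fin I → ℝ)} {θ θ' : Fin I → ℝ}

lemma iInter {ι : Sort*} {Θ : ι → Set (Fin I → ℝ)} (h : ∀ k, SignedPermInvariant I (Θ k)) :
    SignedPermInvariant I (⋂ k, Θ k) :=
  fun σ ε hε θ hθ => Set.mem_iInter.2 fun k => h k σ ε hε θ (Set.mem_iInter.1 hθ k)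

lemma comp_perm_mem (hΘ : SignedPermInvariant I Θ) (σ : Equiv.Perm (Fin I)) (hθ : θ ∈ Θ) :
    θ ∘ σ ∈ Θ := by
  have h := hΘ σ (fun _ => 1) (fun _ => Or.inl rfl) θ hθ
  simp only [one_mul] at h
  exact h

lemma mem_of_abs_eq (hΘ : SignedPermInvariant I Θ) (hθ : θ ∈ Θ) (h : ∀ j, |θ' j| = |θ j|) :
    θ' ∈ Θ := by
  convert hΘ (Equiv.refl _) (fun j => if θ' j = θ j then 1 else -1)
    (fun j => by split_ifs <;> simp) θ hθ using 1
  funext j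
  split_ifs with e
  · rw [e, one_mul]; rfl
  · rw [(abs_eq_abs.1 (h j)).resolve_left e, neg_one_mul]; rfl

lemma ite_abs_mem (hΘ : SignedPermInvariant I Θ) (hconv : Convex ℝ Θ) (hθ : θ ∈ Θ)
    (s : Finset (Fin I)) : (fun j => if j ∈ s then |θ j| else 0) ∈ Θ := by
  have hplus : (fun j => if j ∈ s then |θ j| else θ j) ∈ Θ :=
    hΘ.mem_of_abs_eq hθ fun j => by split_ifs <;> simp
  have hminus : (fun j => if j ∈ s then |θ j| else -θ j) ∈ Θ :=
    hΘ.mem_of_abs_eq hθ fun j => by split_ifs <;> simp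
  convert hconv hplus hminus (by norm_num : (0 : ℝ) ≤ 1 / 2) (by norm_num : (0 : ℝ) ≤ 1 / 2)
    (by norm_num) using 1
  funext j
  by_cases hj : j ∈ s <;> simp [hj]; ring

lemma ite_mean_mem (hΘ : SignedPermInvariant I Θ) (hconv : Convex ℝ Θ) (hθ : θ ∈ Θ)
    {s : Finset (Fin I)} (hs : s.Nonempty) :
    (fun j => if j ∈ s then (∑ k ∈ s, θ k) / #s else θ j) ∈ Θ := by
  have : NeZero #s := ⟨hs.card_pos.ne'⟩
  let e : Fin #s ≃ s := s.equivFin.symm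
  -- average of the `#s` cyclic rotations of the coordinates in `s`
  let rot (k : Fin #s) : Equiv.Perm (Fin I) := (Equiv.addRight k).extendDomain e
  have hmem : ∑ k : Fin #s, (#s : ℝ)⁻¹ • (θ ∘ rot k) ∈ Θ :=
    hconv.sum_mem (fun _ _ => by positivity) (by simp)
      fun k _ => hΘ.comp_perm_mem (rot k) hθ
  convert hmem using 1
  funext j
  simp only [Finset.sum_apply, Pi.smul_apply, smul_eq_mul, Function.comp_apply, ← Finset.mul_sum]
  split_ifs with hj
  · have hrot (k : Fin #s) : rot k j = e (e.symm ⟨j, hj⟩ + k) :=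
      Equiv.Perm.extendDomain_apply_subtype _ e hj
    have hcycle : ∑ k, θ (e (e.symm ⟨j, hj⟩ + k)) = ∑ k ∈ s, θ k :=
      (Equiv.sum_comp (Equiv.addLeft (e.symm ⟨j, hj⟩)) fun a => θ (e a)).trans
        ((e.sum_comp fun x => θ x).trans (s.sum_coe_sort θ))
    simp only [hrot, hcycle, div_eq_inv_mul]
  · have hrot (k : Fin #s) : rot k j = j := Equiv.Perm.extendDomain_apply_not_subtype _ e hj
    simp [hrot, hs.card_pos.ne']

lemma ite_const_mem (hΘ : SignedPermInvariant I Θ) (hc : IsCompact Θ) (hconv : Convex ℝ Θ)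
    (hzero : (0 : Fin I → ℝ) ∈ Θ) {s : Finset (Fin I)} (hs : s.Nonempty) {m : ℝ} (hm0 : 0 ≤ m)
    (hm : m ≤ maxAbsSumOn Θ s) : (fun j => if j ∈ s then m / #s else 0) ∈ Θ := by
  obtain ⟨θ, hθ, hmax⟩ := exists_absSumOn_eq_maxAbsSumOn (s := s) hc ⟨0, hzero⟩
  set S := maxAbsSumOn Θ s
  have hS : 0 ≤ S := maxAbsSumOn_nonneg hc hzero
  have hflat : (fun j => if j ∈ s then S / #s else 0) ∈ Θ := by
    convert hΘ.ite_mean_mem hconv (hΘ.ite_abs_mem hconv hθ s) hs using 2 with j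
    split_ifs with hj
    · rw [← hmax, absSumOn]
    · rfl
  -- scale by `m / S`; when `S = 0` also `m = 0`, so the junk value `m / 0 = 0` is harmless
  convert hconv.smul_mem_of_zero_mem hzero hflat
    ⟨div_nonneg hm0 hS, div_le_one_of_le₀ hm hS⟩ using 1
  funext j
  split_ifs with hj
  · rw [Pi.smul_apply, if_pos hj, smul_eq_mul, ← mul_div_assoc,
      div_mul_cancel_of_imp fun h => le_antisymm (h ▸ hm) hm0]
  · simp [hj]

end SignedPermInvariant

lemma maxAbsSumOn_iInter {I : ℕ} {ι : Type*} [Finite ι] [Nonempty ι] {Θ : ι → Set (Fin I → ℝ)}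
    (hcomp : ∀ k, IsCompact (Θ k)) (hconv : ∀ k, Convex ℝ (Θ k))
    (hzero : ∀ k, (0 : Fin I → ℝ) ∈ Θ k) (hSPI : ∀ k, SignedPermInvariant I (Θ k))
    {s : Finset (Fin I)} (hs : s.Nonempty) :
    maxAbsSumOn (⋂ k, Θ k) s = ⨅ k, maxAbsSumOn (Θ k) s := by
  obtain ⟨k₀⟩ := ‹Nonempty ι›
  have hcompT : IsCompact (⋂ k, Θ k) := (hcomp k₀).of_isClosed_subset
    (isClosed_iInter fun k => (hcomp k).isClosed) (Set.iInter_subset _ k₀)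
  have hzeroT : (0 : Fin I → ℝ) ∈ ⋂ k, Θ k := Set.mem_iInter.2 hzero
  refine le_antisymm
    (le_ciInf fun k => maxAbsSumOn_mono (hcomp k) ⟨0, hzeroT⟩ (Set.iInter_subset _ k)) ?_
  set m := ⨅ k, maxAbsSumOn (Θ k) s
  have hm0 : 0 ≤ m := le_ciInf fun k => maxAbsSumOn_nonneg (hcomp k) (hzero k)
  have hflat : (fun j => if j ∈ s then m / #s else 0) ∈ ⋂ k, Θ k :=
    Set.mem_iInter.2 fun k => (hSPI k).ite_const_mem (hcomp k) (hconv k) (hzero k) hs hm0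
      (ciInf_le (Set.finite_range _).bddBelow k)
  calc m = absSumOn s (fun j => if j ∈ s then m / #s else 0) := by
        rw [absSumOn, Finset.sum_congr rfl fun j hj => by rw [if_pos hj],
          Finset.sum_const, nsmul_eq_mul, abs_of_nonneg (by positivity),
          mul_div_cancel₀ _ (by exact_mod_cast hs.card_pos.ne')]
    _ ≤ maxAbsSumOn (⋂ k, Θ k) s := absSumOn_le_maxAbsSumOn hcompT hflat

theorem stmt_19_general (I n : ℕ) (hn : 0 < n) (Θ : Fin n → Set (Fin I → ℝ))
    (hcomp : ∀ h, IsCompact (Θ h))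
    (hconv : ∀ h, Convex ℝ (Θ h)) (hzero : ∀ h, (0 : Fin I → ℝ) ∈ Θ h)
    (hSPI : ∀ h, SignedPermInvariant I (Θ h))
    (hdiff : ∀ h, ∀ i : ℕ, 1 ≤ i → i ≤ I - 1 →
      eta I (Θ h) (i + 1) - eta I (Θ h) i ≤ eta I (Θ h) i - eta I (Θ h) (i - 1)) :
    SignedPermInvariant I (⋂ h, Θ h) ∧
    (∀ i : ℕ, 1 ≤ i → i ≤ I →
      eta I (⋂ h, Θ h) i = ⨅ h : Fin n, eta I (Θ h) i) ∧
    (∀ i : ℕ, 1 ≤ i → i ≤ I - 1 →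
      eta I (⋂ h, Θ h) (i + 1) - eta I (⋂ h, Θ h) i ≤
        eta I (⋂ h, Θ h) i - eta I (⋂ h, Θ h) (i - 1)) := by
  have : Nonempty (Fin n) := ⟨⟨0, hn⟩⟩
  have hzeroT : (0 : Fin I → ℝ) ∈ ⋂ h, Θ h := Set.mem_iInter.2 hzero
  have hmono (h : Fin n) (i : ℕ) : eta I (⋂ h, Θ h) i ≤ eta I (Θ h) i :=
    maxAbsSumOn_mono (hcomp h) ⟨0, hzeroT⟩ (Set.iInter_subset _ h)
  have hinf (i : ℕ) (hi : 1 ≤ i) (hiI : i ≤ I) :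
      eta I (⋂ h, Θ h) i = ⨅ h : Fin n, eta I (Θ h) i :=
    maxAbsSumOn_iInter hcomp hconv hzero hSPI ⟨⟨0, by omega⟩, by simp; omega⟩
  refine ⟨SignedPermInvariant.iInter hSPI, hinf, fun i hi hiI => ?_⟩
  have hmid : (eta I (⋂ h, Θ h) (i + 1) + eta I (⋂ h, Θ h) (i - 1)) / 2 ≤
      ⨅ h : Fin n, eta I (Θ h) i :=
    le_ciInf fun h => by linarith [hdiff h i hi hiI, hmono h (i + 1), hmono h (i - 1)]
  rw [← hinf i hi (by omega)] at hmid
  linarith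

theorem stmt_19 (I n : ℕ) (hn : 0 < n) (Θ : Fin n → Set (Fin I → ℝ))
    (hne : ∀ h, (Θ h).Nonempty) (hcomp : ∀ h, IsCompact (Θ h))
    (hconv : ∀ h, Convex ℝ (Θ h)) (hzero : ∀ h, (0 : Fin I → ℝ) ∈ Θ h)
    (hSPI : ∀ h, SignedPermInvariant I (Θ h))
    (hdiff : ∀ h, ∀ i : ℕ, 1 ≤ i → i ≤ I - 1 →
      eta I (Θ h) (i + 1) - eta I (Θ h) i ≤ eta I (Θ h) i - eta I (Θ h) (i - 1)) :
    SignedPermInvariant I (⋂ h, Θ h) ∧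
    (∀ i : ℕ, 1 ≤ i → i ≤ I →
      eta I (⋂ h, Θ h) i = ⨅ h : Fin n, eta I (Θ h) i) ∧
    (∀ i : ℕ, 1 ≤ i → i ≤ I - 1 →
      eta I (⋂ h, Θ h) (i + 1) - eta I (⋂ h, Θ h) i ≤
        eta I (⋂ h, Θ h) i - eta I (⋂ h, Θ h) (i - 1)) :=
  stmt_19_general I n hn Θ hcomp hconv hzero hSPI hdiff
end
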